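/- arXiv:1409.8324 — 3 statements merged into one kernel-verified Lean document; each statement's English description precedes it below -/
import Mathlib

section
/- Let d be a relation on a type α (read d a b as 'a depends on b'), and call a list l : List α a d-serialization if no element depends on an element occurring later in the list, i.e. List.Pairwise (fun a b => ¬ d a b) l. Suppose l = p ++ m ++ s is a d-serialization with no duplicate elements, and m1, m2, m3 are sublists of m such that m1 ++ m2 ++ m3 is a permutation of m, no element of m1 is related by d (in either direction) to any element of m2, and no element of m3 is related by d (in either direction) to any element of m1 or of m2. Then p ++ m2 ++ m1 ++ m3 ++ s is also a d-serialization. -/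
/-- A list `l` is a `d`-serialization if no element depends on an element
occurring later in the list. -/
def IsSerialization {α : Type*} (d : α → α → Prop) (l : List α) : Prop :=
  List.Pairwise (fun a b => ¬ d a b) l

/-- The core permutation step: if `l = p ++ m ++ s` is a `d`-serialization with no
duplicates, and `m1, m2, m3` are sublists of `m` with `m1 ++ m2 ++ m3` a permutation
of `m`, such that no element of `m1` is `d`-related (in either direction) to any
element of `m2`, and no element of `m3` is `d`-related (in either direction) to any
element of `m1` or `m2`, then `p ++ m2 ++ m1 ++ m3 ++ s` is also a `d`-serialization. -/
theorem swap_independent_sets_serialization {α : Type*} (d : α → α → Prop)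
    (p m s m1 m2 m3 : List α)
    (hser : IsSerialization d (p ++ m ++ s))
    (hnodup : (p ++ m ++ s).Nodup)
    (hm1 : m1.Sublist m) (hm2 : m2.Sublist m) (hm3 : m3.Sublist m)
    (hperm : (m1 ++ m2 ++ m3).Perm m)
    (h12 : ∀ a ∈ m1, ∀ b ∈ m2, ¬ d a b ∧ ¬ d b a)
    (h3 : ∀ c ∈ m3, ∀ b ∈ m1 ++ m2, ¬ d c b ∧ ¬ d b c) :
    IsSerialization d (p ++ m2 ++ m1 ++ m3 ++ s) := by
  unfold IsSerialization at hser ⊢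
  rw [List.pairwise_append] at hser
  obtain ⟨hpm, hs, hpms'⟩ := hser
  rw [List.pairwise_append] at hpm
  obtain ⟨hp, hm, hpm'⟩ := hpm
  have hpms : ∀ a ∈ p, ∀ b ∈ s, ¬ d a b := fun a ha => hpms' a (by simp [ha])
  have hms' : ∀ a ∈ m, ∀ b ∈ s, ¬ d a b := fun a ha => hpms' a (by simp [ha])
  have hmem : ∀ x, x ∈ m2 ++ m1 ++ m3 → x ∈ m := by
    intro x hx
    apply hperm.mem_iff.mp
    simp only [List.mem_append] at hx ⊢
    tauto
  have h1 := hm.sublist hm1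
  have h2 := hm.sublist hm2
  have h3' := hm.sublist hm3
  have hmid : List.Pairwise (fun a b => ¬ d a b) (m2 ++ m1 ++ m3) := by
    rw [List.pairwise_append, List.pairwise_append]
    refine ⟨⟨h2, h1, ?_⟩, h3', ?_⟩
    · intro a ha b hb; exact (h12 b hb a ha).2
    · intro a ha c hc
      rcases List.mem_append.mp ha with h | h
      · exact (h3 c hc a (by simp [h])).2
      · exact (h3 c hc a (by simp [h])).2
  have key : List.Pairwise (fun a b => ¬ d a b) ((p ++ (m2 ++ m1 ++ m3)) ++ s) := by
    rw [List.pairwise_append, List.pairwise_append]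
    refine ⟨⟨hp, hmid, fun a ha b hb => hpm' a ha b (hmem b hb)⟩,
      hs, ?_⟩
    intro a ha b hb
    rcases List.mem_append.mp ha with h | h
    · exact hpms a h b hb
    · exact hms' a (hmem a h) b hb
  simpa [List.append_assoc] using key
end

section
/- Let d be a transitive relation on a type α with decidable equality, and suppose l = p ++ a :: s is a d-serialization (List.Pairwise (fun x y => ¬ d x y) l) with no duplicate elements. Let D = {x | d a x} be the set of elements that a depends on (membership in D assumed decidable). Then the list obtained by keeping, before a, only those elements of p lying in D (in their original order), and moving the remaining elements of p to immediately after a (in their original order), namely (p.filter (· ∈ D)) ++ a :: (p.filter (· ∉ D)) ++ s, is again a d-serialization. -/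
/-! Keeping before `a` only the elements of `p` satisfying `q`, the pairs that change order are
exactly those `x, y ∈ p` with `q x` and `¬ q y`, and the new pairs with `a` first are those with
`¬ q y`. For `R = ¬ d` and `q = d a` both are harmless by transitivity of `d`: `d x y` together
with `d a x` would give `d a y`. -/

open List in
theorem pairwise_filter_append_cons_filter_not {α : Type*} {R : α → α → Prop}
    {q : α → Prop} [DecidablePred q] {a : α} {p s : List α}
    (h : (p ++ a :: s).Pairwise R) (ha : ∀ y, ¬ q y → R a y)
    (hq : ∀ x y, q x → ¬ q y → R x y) :
    ((p.filter fun x => decide (q x)) ++ a :: (p.filter fun x => decide ¬ q x) ++ s).Pairwise R := by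
  have hrest : ((p.filter fun x => decide ¬ q x) ++ s).Pairwise R :=
    h.sublist (filter_sublist.append (sublist_cons_self a s))
  obtain ⟨hp, ⟨has, -⟩, hcross⟩ := by simpa only [pairwise_append, pairwise_cons] using h
  rw [append_assoc, cons_append, pairwise_append, pairwise_cons]
  refine ⟨hp.sublist filter_sublist, ⟨fun y hy => ?_, hrest⟩, fun x hx y hy => ?_⟩
  · rcases mem_append.1 hy with hy | hy
    · exact ha y (of_decide_eq_true (mem_filter.1 hy).2)
    · exact has y hy
  · obtain ⟨hxp, hqx⟩ := mem_filter.1 hx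
    rcases mem_cons.1 hy with rfl | hy
    · exact hcross x hxp y mem_cons_self
    rcases mem_append.1 hy with hy | hy
    · obtain ⟨-, hqy⟩ := mem_filter.1 hy
      exact hq x y (of_decide_eq_true hqx) (of_decide_eq_true hqy)
    · exact hcross x hxp y (mem_cons_of_mem a hy)

theorem move_nondependencies_after_serialization_general {α : Type*}
    (d : α → α → Prop) (htrans : Transitive d)
    (a : α) (p s : List α) [DecidablePred (d a)]
    (hser : IsSerialization d (p ++ a :: s)) :
    IsSerialization d
      ((p.filter fun x => decide (d a x)) ++
        a :: (p.filter fun x => decide ¬ d a x) ++ s) :=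
  pairwise_filter_append_cons_filter_not hser (fun _ hy => hy)
    fun _ _ hax hay hxy => hay (htrans hax hxy)

/-- Moving the elements of `p` that `a` does not depend on to immediately after `a`
(keeping, before `a`, only the elements of `p` that `a` depends on, in their original
order) preserves being a `d`-serialization, for a transitive relation `d`. -/
theorem move_nondependencies_after_serialization {α : Type*} [DecidableEq α]
    (d : α → α → Prop) (htrans : Transitive d)
    (a : α) (p s : List α) [DecidablePred (d a)]
    (hser : IsSerialization d (p ++ a :: s))
    (hnodup : (p ++ a :: s).Nodup) :
    IsSerialization d
      ((p.filter fun x => decide (d a x)) ++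
        a :: (p.filter fun x => decide ¬ d a x) ++ s) :=
  move_nondependencies_after_serialization_general d htrans a p s hser
end

section
/- In the abstract serial database model with unbounded dependency lists, let τ be a valid serial execution and let S be a read snapshot over τ that passes the consistency check. Then for any two pairs (o, v) ∈ S and (o', v') ∈ S with (o, v) ≠ (o', v'), and for every w > v', the pair (o, v) does not depend on (o', w) with respect to τ. That is, no version read by a check-passing read-only transaction depends on a strictly newer version of another object read by the same transaction. -/
/-- An update transaction: read set `R`, write set `W`, and version `v`. -/
structure Txn (ι : Type*) where
  R : Finset ι
  W : Finset ι
  v : ℕ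

/-- A database state: a current version for each object and a dependency list
(here an unbounded set of identifier/version pairs) for each object. -/
structure DBState (ι : Type*) where
  ver : ι → ℕ
  dep : ι → Set (ι × ℕ)

/-- The initial state: all versions `0`, all dependency lists empty. -/
def initState (ι : Type*) : DBState ι :=
  { ver := fun _ => 0, dep := fun _ => ∅ }

/-- Executing a transaction `T` in state `st`: with
`full = ⋃ k ∈ T.R, ({(k, if k ∈ T.W then T.v else st.ver k)} ∪ st.dep k)`,
every `o ∈ T.W` gets version `T.v` and dependency list `full \ {(o, T.v)}`;
objects outside `T.W` are unchanged. -/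
def step {ι : Type*} [DecidableEq ι] (st : DBState ι) (T : Txn ι) : DBState ι :=
  let full : Set (ι × ℕ) :=
    ⋃ k ∈ (T.R : Set ι), ({(k, if k ∈ T.W then T.v else st.ver k)} ∪ st.dep k)
  { ver := fun o => if o ∈ T.W then T.v else st.ver o
    dep := fun o => if o ∈ T.W then full \ {(o, T.v)} else st.dep o }

/-- The state reached by executing the transactions of `τ` in order from the
initial state. -/
def run {ι : Type*} [DecidableEq ι] (τ : List (Txn ι)) : DBState ι :=
  τ.foldl step (initState ι)

/-- A serial execution: the transactions have pairwise distinct positive versions,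
and each transaction reads every object it writes. -/
def SerialExec {ι : Type*} (τ : List (Txn ι)) : Prop :=
  (τ.map Txn.v).Nodup ∧ ∀ T ∈ τ, 0 < T.v ∧ T.W ⊆ T.R

/-- `τ` is valid: whenever a transaction executes, its version is strictly larger
than the current version of every object in its read set. -/
def Valid {ι : Type*} [DecidableEq ι] (τ : List (Txn ι)) : Prop :=
  ∀ p T s, τ = p ++ T :: s → ∀ k ∈ T.R, (run p).ver k < T.v

/-- Direct dependency w.r.t. `τ`: `(o, u) ⇝ (d, w)` iff some transaction `T` of `τ`,
executed in the state reached after the prefix `p`, has `o ∈ T.W`, `u = T.v`,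
`d ∈ T.R`, `(d, w) ≠ (o, T.v)` and `w = (if d ∈ T.W then T.v else (run p).ver d)`. -/
def DirectDep {ι : Type*} [DecidableEq ι] (τ : List (Txn ι)) (x y : ι × ℕ) : Prop :=
  ∃ p T s, τ = p ++ T :: s ∧ x.1 ∈ T.W ∧ x.2 = T.v ∧ y.1 ∈ T.R ∧
    y ≠ (x.1, T.v) ∧ y.2 = (if y.1 ∈ T.W then T.v else (run p).ver y.1)

/-- `(o, u)` depends on `(d, w)`: the transitive closure of direct dependency. -/
def TxnDependsOn {ι : Type*} [DecidableEq ι] (τ : List (Txn ι)) : ι × ℕ → ι × ℕ → Prop :=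
  Relation.TransGen (DirectDep τ)

/-- A read snapshot over `τ`: a finite set of (object, version) pairs with pairwise
distinct objects, each version being either `0` or a version installed for that
object by some transaction of `τ`. -/
def Snapshot {ι : Type*} (τ : List (Txn ι)) (S : Finset (ι × ℕ)) : Prop :=
  (∀ x ∈ S, ∀ y ∈ S, x ≠ y → x.1 ≠ y.1) ∧
  ∀ x ∈ S, x.2 = 0 ∨ ∃ p T s, τ = p ++ T :: s ∧ x.1 ∈ T.W ∧ x.2 = T.v

/-- `S` passes the T-Cache consistency check: there are no `(o, v) ∈ S` and
`(k, w') ∈ S` such that the dependency list of `o`, in the state immediately after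
the transaction of `τ` that installed version `v` of `o`, contains a pair `(k, w)`
with `w > w'` (for `v = 0` the dependency list is empty, and no installing
transaction exists since versions are positive). -/
def PassesCheck {ι : Type*} [DecidableEq ι] (τ : List (Txn ι))
    (S : Finset (ι × ℕ)) : Prop :=
  ¬ ∃ o v k w w', (o, v) ∈ S ∧ (k, w') ∈ S ∧ w' < w ∧
    ∃ p T s, τ = p ++ T :: s ∧ o ∈ T.W ∧ v = T.v ∧ (k, w) ∈ (run (p ++ [T])).dep o

/-- Two update transactions conflict if one writes an object the other reads. -/
def Conflict {ι : Type*} [DecidableEq ι] (T T' : Txn ι) : Prop :=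
  (T.W ∩ T'.R).Nonempty ∨ (T'.W ∩ T.R).Nonempty

/-- `τ'` is a conflict-equivalent permutation of `τ`: it is a permutation of `τ`
that preserves the relative order of every pair of conflicting transactions. -/
def ConflictEquiv {ι : Type*} [DecidableEq ι] (τ τ' : List (Txn ι)) : Prop :=
  τ.Perm τ' ∧ ∀ T T', Conflict T T' → ([T, T'].Sublist τ ↔ [T, T'].Sublist τ')

/-!
Write `L(x)` for the dependency list installed together with version `x`, and say that a set `X`
dominates `(k, u)` if `(k, u') ∈ X` for some `u' ≥ u`. In a valid execution the lineage
`{(a, ver a)} ∪ dep a` of every object is closed under `L` up to domination: whenever it dominates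
`x`, it dominates all of `L(x)`. This is preserved by a transaction `T` writing `a`, because the new
lineage is `{(a, T.v)} ∪ full` and `full` dominates the lineage of every object that `T` reads
(validity makes `(j, T.v)` dominate `(j, ver j)`), while `L` of the new version is `full` itself.

Hence everything `(o, v)` depends on is dominated by `{(o, v)} ∪ L(o, v)`. A dependency on
`(o', w)` with `o' ≠ o` and `w > v'` therefore puts some `(o', w'')` with `w'' ≥ w > v'` into
`L(o, v)`, which the consistency check rejects.
-/

namespace DBState

variable {ι : Type*} [DecidableEq ι]

/-- The paper's `full`: what a transaction `T` executed in `st` reads, with the versions it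
writes already bumped to `T.v`. -/
def readDeps (st : DBState ι) (T : Txn ι) : Set (ι × ℕ) :=
  ⋃ k ∈ (T.R : Set ι), ({(k, if k ∈ T.W then T.v else st.ver k)} ∪ st.dep k)

def lineage (st : DBState ι) (a : ι) : Set (ι × ℕ) :=
  insert (a, st.ver a) (st.dep a)

theorem mem_readDeps {st : DBState ι} {T : Txn ι} {x : ι × ℕ} :
    x ∈ st.readDeps T ↔
      ∃ j ∈ T.R, x = (j, if j ∈ T.W then T.v else st.ver j) ∨ x ∈ st.dep j := by
  simp [readDeps]

end DBState

open DBState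

section Step

variable {ι : Type*} [DecidableEq ι] {st : DBState ι} {T : Txn ι} {a : ι}

theorem step_ver_of_mem (ha : a ∈ T.W) : (step st T).ver a = T.v := if_pos ha

theorem step_ver_of_not_mem (ha : a ∉ T.W) : (step st T).ver a = st.ver a := if_neg ha

theorem step_dep_of_mem (ha : a ∈ T.W) :
    (step st T).dep a = st.readDeps T \ {(a, T.v)} := if_pos ha

theorem step_dep_of_not_mem (ha : a ∉ T.W) : (step st T).dep a = st.dep a := if_neg ha

theorem lineage_step_of_mem (ha : a ∈ T.W) :
    (step st T).lineage a = insert (a, T.v) (st.readDeps T) := by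
  rw [lineage, step_ver_of_mem ha, step_dep_of_mem ha, Set.insert_sdiff_singleton]

theorem lineage_step_of_not_mem (ha : a ∉ T.W) : (step st T).lineage a = st.lineage a := by
  rw [lineage, lineage, step_ver_of_not_mem ha, step_dep_of_not_mem ha]

theorem mem_lineage_step (ha : a ∈ T.W) {y : ι × ℕ} (hy : y ∈ (step st T).lineage a) :
    (∃ j ∈ T.R, y ∈ st.lineage j) ∨ (y.1 ∈ T.W ∧ y.2 = T.v) := by
  rw [lineage_step_of_mem ha, Set.mem_insert_iff, mem_readDeps] at hy
  rcases hy with rfl | ⟨j, hj, rfl | hy⟩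
  · exact Or.inr ⟨ha, rfl⟩
  · by_cases hjW : j ∈ T.W
    · simp [hjW]
    · exact Or.inl ⟨j, hj, by simp [lineage, hjW]⟩
  · exact Or.inl ⟨j, hj, Set.mem_insert_of_mem _ hy⟩

end Step

def Dominated {ι : Type*} (X : Set (ι × ℕ)) (x : ι × ℕ) : Prop :=
  ∃ w, x.2 ≤ w ∧ (x.1, w) ∈ X

namespace Dominated

variable {ι : Type*} {X Y : Set (ι × ℕ)} {x : ι × ℕ}

theorem of_mem (h : x ∈ X) : Dominated X x := ⟨x.2, le_rfl, h⟩

theorem mono (h : Dominated X x) (hXY : X ⊆ Y) : Dominated Y x :=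
  h.imp fun _ ⟨hxw, hw⟩ => ⟨hxw, hXY hw⟩

theorem trans (h : Dominated X x) (hXY : ∀ y ∈ X, Dominated Y y) : Dominated Y x :=
  let ⟨_, hxw, hw⟩ := h
  let ⟨w', hww', hw'⟩ := hXY _ hw
  ⟨w', hxw.trans hww', hw'⟩

end Dominated

theorem dominated_readDeps_of_mem_lineage {ι : Type*} [DecidableEq ι] {st : DBState ι}
    {T : Txn ι} {j : ι} (hj : j ∈ T.R) (hver : st.ver j ≤ T.v) {y : ι × ℕ}
    (hy : y ∈ st.lineage j) : Dominated (st.readDeps T) y := by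
  rcases hy with rfl | hy
  · by_cases hjW : j ∈ T.W
    · exact ⟨T.v, hver, mem_readDeps.2 ⟨j, hj, Or.inl (by simp [hjW])⟩⟩
    · exact .of_mem (mem_readDeps.2 ⟨j, hj, Or.inl (by simp [hjW])⟩)
  · exact .of_mem (mem_readDeps.2 ⟨_, hj, Or.inr hy⟩)

theorem SerialExec.eq_of_v_eq {ι : Type*} {τ p q s s' : List (Txn ι)} {T T' : Txn ι}
    (hse : SerialExec τ) (hτ : τ = p ++ T :: s)
    (hτ' : τ = q ++ T' :: s') (hv : T.v = T'.v) : p = q ∧ T = T' := by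
  have hlen : p.length = q.length := by
    refine (hse.1.getElem_inj_iff (hi := by simp [hτ]) (hj := by simp [hτ'])).1 ?_
    simp only [List.getElem_map, List.getElem_of_append hτ rfl, List.getElem_of_append hτ' rfl,
      hv]
  obtain ⟨rfl, h⟩ := List.append_inj (hτ.symm.trans hτ') hlen
  exact ⟨rfl, (List.cons.inj h).1⟩

section Execution

variable {ι : Type*} [DecidableEq ι]

theorem run_append_singleton (p : List (Txn ι)) (T : Txn ι) :
    run (p ++ [T]) = step (run p) T := by
  simp [run]

/-- `z ∈ L(x)`: `z` is in the dependency list installed together with version `x`. -/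
def InstalledDep (τ : List (Txn ι)) (x z : ι × ℕ) : Prop :=
  ∃ p T s, τ = p ++ T :: s ∧ x.1 ∈ T.W ∧ x.2 = T.v ∧ z ∈ (run (p ++ [T])).dep x.1

variable {τ p q s s' : List (Txn ι)} {T T' : Txn ι}

theorem DirectDep.installedDep {x z : ι × ℕ} (h : DirectDep τ x z) : InstalledDep τ x z := by
  obtain ⟨p, T, s, hτ, hxW, hxv, hzR, hne, hzv⟩ := h
  refine ⟨p, T, s, hτ, hxW, hxv, ?_⟩
  rw [run_append_singleton, step_dep_of_mem hxW]
  exact ⟨mem_readDeps.2 ⟨z.1, hzR, Or.inl (Prod.ext rfl hzv)⟩, hne⟩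

theorem ver_take_mono (hse : SerialExec τ) (hval : Valid τ) (k : ι) :
    Monotone fun i => (run (τ.take i)).ver k := by
  refine monotone_nat_of_le_succ fun i => ?_
  rcases lt_or_ge i τ.length with hi | hi
  · have hτ : τ = τ.take i ++ τ[i] :: τ.drop (i + 1) := by simp
    rw [List.take_succ_eq_append_getElem hi, run_append_singleton]
    by_cases hk : k ∈ τ[i].W
    · rw [step_ver_of_mem hk]
      exact (hval _ _ _ hτ k ((hse.2 _ (List.getElem_mem hi)).2 hk)).le
    · rw [step_ver_of_not_mem hk]
  · simp only [List.take_of_length_le hi, List.take_of_length_le (Nat.le_succ_of_le hi), le_rfl]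

theorem le_ver_of_installed (hse : SerialExec τ) (hval : Valid τ) (hτ : τ = p ++ T :: s)
    (hτ' : τ = q ++ T' :: s') {k : ι} (hk : k ∈ T.W) (hk' : k ∈ T'.W) (hlt : T'.v < T.v) :
    T'.v ≤ (run p).ver k := by
  have hmono := ver_take_mono hse hval k
  have take_eq {p s : List (Txn ι)} {T : Txn ι} (h : τ = p ++ T :: s) :
      τ.take p.length = p ∧ τ.take (p.length + 1) = p ++ [T] := by
    subst h; simp [List.take_append]
  have installed {p s : List (Txn ι)} {T : Txn ι} (h : τ = p ++ T :: s) (hk : k ∈ T.W) :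
      (run (τ.take (p.length + 1))).ver k = T.v := by
    rw [(take_eq h).2, run_append_singleton, step_ver_of_mem hk]
  rcases lt_trichotomy q.length p.length with h | h | h
  · calc T'.v = (run (τ.take (q.length + 1))).ver k := (installed hτ' hk').symm
      _ ≤ (run (τ.take p.length)).ver k := hmono h
      _ = (run p).ver k := by rw [(take_eq hτ).1]
  · obtain ⟨-, h⟩ := List.append_inj (hτ'.symm.trans hτ) h
    exact absurd hlt ((List.cons.inj h).1 ▸ lt_irrefl _)
  · have := hval q T' s' hτ' k ((hse.2 T' (by simp [hτ'])).2 hk')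
    have := hmono (show p.length + 1 ≤ q.length by omega)
    simp only [installed hτ hk, (take_eq hτ').1] at this
    omega

theorem dominated_lineage_of_installedDep (hse : SerialExec τ) (hval : Valid τ) (hp : p <+: τ)
    (a : ι) {x z : ι × ℕ} (hx : Dominated ((run p).lineage a) x) (hxz : InstalledDep τ x z) :
    Dominated ((run p).lineage a) z := by
  induction p using List.reverseRecOn generalizing a x with
  | nil =>
    obtain ⟨w, hxw, hw⟩ := hx
    obtain ⟨q, T, s, hτ, -, hxv, -⟩ := hxz
    have := (hse.2 T (by simp [hτ])).1
    simp [lineage, run, initState] at hw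
    omega
  | append_singleton p T ih =>
    obtain ⟨s, hτ⟩ : ∃ s, τ = p ++ T :: s := by
      obtain ⟨s, hs⟩ := hp
      exact ⟨s, by simp [← hs]⟩
    have hpτ : p <+: τ := ⟨T :: s, hτ.symm⟩
    rw [run_append_singleton] at hx ⊢
    by_cases ha : a ∈ T.W
    swap
    · rw [lineage_step_of_not_mem ha] at hx ⊢
      exact ih hpτ a hx hxz
    obtain ⟨q, T', s', hτ', hxW, hxv, hz⟩ := hxz
    by_cases hvT : x.2 = T.v
    · obtain ⟨rfl, rfl⟩ := hse.eq_of_v_eq hτ' hτ (hxv ▸ hvT)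
      rw [run_append_singleton, step_dep_of_mem hxW] at hz
      exact .of_mem (lineage_step_of_mem ha ▸ Set.mem_insert_of_mem _ hz.1)
    obtain ⟨j, hj, hxj⟩ : ∃ j ∈ T.R, Dominated ((run p).lineage j) x := by
      obtain ⟨w, hxw, hw⟩ := hx
      rcases mem_lineage_step ha hw with ⟨j, hj, hw⟩ | ⟨hW, hwv⟩
      · exact ⟨j, hj, w, hxw, hw⟩
      · -- `x` is an older version of an object that `T` writes, hence installed before `T`
        refine ⟨x.1, (hse.2 T (by simp [hτ])).2 hW, (run p).ver x.1, ?_, Set.mem_insert _ _⟩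
        rw [hxv]
        exact le_ver_of_installed hse hval hτ hτ' hW hxW (by omega)
    have hzj := ih hpτ j hxj ⟨q, T', s', hτ', hxW, hxv, hz⟩
    have hz_read : Dominated ((run p).readDeps T) z :=
      hzj.trans fun y hy => dominated_readDeps_of_mem_lineage hj (hval p T s hτ j hj).le hy
    rw [lineage_step_of_mem ha]
    exact hz_read.mono (Set.subset_insert _ _)

end Execution

/-- The paper's independence Lemma: if a read snapshot `S` over a valid serial
execution `τ` passes the consistency check, then for any two distinct pairs
`(o, v) ∈ S` and `(o', v') ∈ S` and any `w > v'`, the pair `(o, v)` does not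
depend on `(o', w)` with respect to `τ`. -/
theorem no_dep_on_newer_version {ι : Type*} [DecidableEq ι] (τ : List (Txn ι))
    (hse : SerialExec τ) (hval : Valid τ)
    (S : Finset (ι × ℕ)) (hsnap : Snapshot τ S) (hchk : PassesCheck τ S) :
    ∀ o v o' v', (o, v) ∈ S → (o', v') ∈ S → (o, v) ≠ (o', v') →
      ∀ w, v' < w → ¬ TxnDependsOn τ (o, v) (o', w) := by
  intro o v o' v' hoS ho'S hne w hv'w hdep
  obtain ⟨-, ⟨p, T, s, hτ, hoW, hvT, -⟩, -⟩ := Relation.TransGen.head'_iff.mp hdep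
  have hpτ : p ++ [T] <+: τ := ⟨s, by simp [hτ]⟩
  have hlineage : (run (p ++ [T])).lineage o = insert (o, v) ((run (p ++ [T])).dep o) := by
    rw [lineage, run_append_singleton, step_ver_of_mem hoW, ← hvT]
  have hreach : ∀ z, TxnDependsOn τ (o, v) z → Dominated ((run (p ++ [T])).lineage o) z := by
    intro z hz
    induction hz with
    | single h =>
      exact dominated_lineage_of_installedDep hse hval hpτ o
        (.of_mem (hlineage ▸ Set.mem_insert _ _)) h.installedDep
    | tail _ h ih => exact dominated_lineage_of_installedDep hse hval hpτ o ih h.installedDep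
  obtain ⟨w', hww', hw'⟩ := hreach _ hdep
  rw [hlineage] at hw'
  rcases hw' with heq | hw'
  · exact hsnap.1 _ hoS _ ho'S hne (congrArg Prod.fst heq).symm
  · exact hchk ⟨o, v, o', w', v', hoS, ho'S, by omega, p, T, s, hτ, hoW, hvT, hw'⟩
end
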